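/- Let d = ⌊(n − k)/λ⌋. For every message m ∈ {0,1}^k and every x ∈ S_n^λ with ℓ∞(x, E_{n,k}^λ(m)) ≤ (d − 1)/2, the decoder satisfies U_{n,k}^λ(x) = m. -/
import Mathlib


open Finset

/-- Ceiling division: `cdiv a b = ⌈a/b⌉` for natural numbers (with `b > 0`). -/
def cdiv (a b : ℕ) : ℕ := (a + b - 1) / b

/-- `ones msg i` : number of indices `j < i` (0-indexed) with `msg j = 1`. -/
def ones {k : ℕ} (msg : Fin k → Bool) (i : ℕ) : ℕ :=
  (univ.filter fun j : Fin k => j.val < i ∧ msg j = true).card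

/-- `zeros msg i` : number of indices `j < i` (0-indexed) with `msg j = 0`. -/
def zeros {k : ℕ} (msg : Fin k → Bool) (i : ℕ) : ℕ :=
  (univ.filter fun j : Fin k => j.val < i ∧ msg j = false).card

/-- The encoding map `E_{n,k}^λ`.  The `i`-th entry (0-indexed `i`, so 1-indexed
position `i+1`) of the codeword of `msg` is `⌈(n − o_i)/λ⌉` if `msg i = 1`,
`⌈(1 + z_i)/λ⌉` if `msg i = 0` (where `o_i`, `z_i` count ones resp. zeros among
the earlier message bits), and `⌈((i+1) − o)/λ⌉` for positions past `k`, where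
`o` is the total number of ones in `msg`. -/
def enc (n k lam : ℕ) (msg : Fin k → Bool) : Fin n → ℕ :=
  fun i =>
    if h : i.val < k then
      if msg ⟨i.val, h⟩ = true then cdiv (n - ones msg i.val) lam
      else cdiv (1 + zeros msg i.val) lam
    else cdiv (i.val + 1 - ones msg k) lam

/-- `ℓ∞` distance between two sequences of naturals. -/
def linfN {n : ℕ} (x y : Fin n → ℕ) : ℕ :=
  univ.sup fun i => ((x i : ℤ) - (y i : ℤ)).natAbs

/-- Membership in `S_n^λ` : all entries lie in `{1,…,m}` and each symbol
`v ∈ {1,…,m}` occurs exactly `λ` times. -/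
def memSnl (n m lam : ℕ) (x : Fin n → ℕ) : Prop :=
  (∀ i, x i ∈ Finset.Icc 1 m) ∧
  ∀ v ∈ Finset.Icc 1 m, (univ.filter fun i => x i = v).card = lam

/-- State `(max, min)` of the decoder `U_{n,k}^λ` before the `(i+1)`-st
iteration (0-indexed `i`): initially `(n, 1)`; at each step the decoder reads
`x i`, outputs `1` and decrements `max` if `|x_i − ⌈max/λ⌉| < |x_i − ⌈min/λ⌉|`,
and otherwise outputs `0` and increments `min`. -/
def decMaxMin (n lam : ℕ) (x : ℕ → ℕ) : ℕ → ℕ × ℕ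
  | 0 => (n, 1)
  | i + 1 =>
    let p := decMaxMin n lam x i
    if ((x i : ℤ) - (cdiv p.1 lam : ℤ)).natAbs
        < ((x i : ℤ) - (cdiv p.2 lam : ℤ)).natAbs
    then (p.1 - 1, p.2) else (p.1, p.2 + 1)

/-- The decoder `U_{n,k}^λ`. -/
def decodeU (n k lam : ℕ) (x : Fin n → ℕ) : Fin k → Bool :=
  fun i =>
    let x' : ℕ → ℕ := fun j => if h : j < n then x ⟨j, h⟩ else 0
    let p := decMaxMin n lam x' i.val
    decide (((x' i.val : ℤ) - (cdiv p.1 lam : ℤ)).natAbs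
      < ((x' i.val : ℤ) - (cdiv p.2 lam : ℤ)).natAbs)

lemma cdiv_mono {lam a b : ℕ} (h : a ≤ b) : cdiv a lam ≤ cdiv b lam :=
  Nat.div_le_div_right (by omega)

lemma cdiv_add_mul {lam : ℕ} (hl : 0 < lam) (a q : ℕ) :
    cdiv (a + lam * q) lam = cdiv a lam + q := by
  unfold cdiv
  have h1 : a + lam * q + lam - 1 = a + lam - 1 + lam * q := by omega
  rw [h1, Nat.add_mul_div_left _ _ hl]

lemma cdiv_gap {lam : ℕ} (hl : 0 < lam) {a b : ℕ} (h : a ≤ b) :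
    cdiv a lam + (b - a) / lam ≤ cdiv b lam := by
  set q := (b - a) / lam with hq
  have h1 : q * lam ≤ b - a := Nat.div_mul_le_self _ _
  have h2 : a + lam * q ≤ b := by
    have : lam * q = q * lam := Nat.mul_comm _ _
    omega
  calc cdiv a lam + q = cdiv (a + lam * q) lam := (cdiv_add_mul hl a q).symm
    _ ≤ cdiv b lam := cdiv_mono h2

lemma count_succ {k : ℕ} (msg : Fin k → Bool) (b : Bool) {i : ℕ} (h : i < k) :
    (univ.filter fun j : Fin k => j.val < i + 1 ∧ msg j = b).card
      = (univ.filter fun j : Fin k => j.val < i ∧ msg j = b).card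
        + (if msg ⟨i, h⟩ = b then 1 else 0) := by
  by_cases hp : msg ⟨i, h⟩ = b
  · rw [if_pos hp]
    have hset : (univ.filter fun j : Fin k => j.val < i + 1 ∧ msg j = b)
        = insert ⟨i, h⟩ (univ.filter fun j : Fin k => j.val < i ∧ msg j = b) := by
      ext j
      simp only [mem_filter, mem_univ, true_and, mem_insert]
      constructor
      · rintro ⟨hj, hpj⟩
        rcases Nat.lt_succ_iff_lt_or_eq.mp hj with h' | h'
        · exact Or.inr ⟨h', hpj⟩
        · exact Or.inl (Fin.ext h')
      · rintro (rfl | ⟨hj, hpj⟩)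
        · exact ⟨Nat.lt_succ_self i, hp⟩
        · exact ⟨Nat.lt_succ_of_lt hj, hpj⟩
    rw [hset, card_insert_of_notMem]
    simp
  · rw [if_neg hp]
    have hset : (univ.filter fun j : Fin k => j.val < i + 1 ∧ msg j = b)
        = (univ.filter fun j : Fin k => j.val < i ∧ msg j = b) := by
      ext j
      simp only [mem_filter, mem_univ, true_and]
      constructor
      · rintro ⟨hj, hpj⟩
        rcases Nat.lt_succ_iff_lt_or_eq.mp hj with h' | h'
        · exact ⟨h', hpj⟩
        · have hji : j = ⟨i, h⟩ := Fin.ext h'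
          rw [hji] at hpj
          exact absurd hpj hp
      · rintro ⟨hj, hpj⟩
        exact ⟨Nat.lt_succ_of_lt hj, hpj⟩
    rw [hset]
    omega

lemma ones_succ {k : ℕ} (msg : Fin k → Bool) {i : ℕ} (h : i < k) :
    ones msg (i + 1) = ones msg i + (if msg ⟨i, h⟩ = true then 1 else 0) :=
  count_succ msg true h

lemma zeros_succ {k : ℕ} (msg : Fin k → Bool) {i : ℕ} (h : i < k) :
    zeros msg (i + 1) = zeros msg i + (if msg ⟨i, h⟩ = false then 1 else 0) :=
  count_succ msg false h

lemma ones_zero {k : ℕ} (msg : Fin k → Bool) : ones msg 0 = 0 := by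
  simp [ones]

lemma zeros_zero {k : ℕ} (msg : Fin k → Bool) : zeros msg 0 = 0 := by
  simp [zeros]

lemma ones_add_zeros {k : ℕ} (msg : Fin k → Bool) :
    ∀ i, i ≤ k → ones msg i + zeros msg i = i := by
  intro i
  induction i with
  | zero => intro _; simp [ones_zero, zeros_zero]
  | succ i ih =>
    intro h
    have hi : i < k := h
    rw [ones_succ msg hi, zeros_succ msg hi]
    have := ih (Nat.le_of_lt hi)
    cases hm : msg ⟨i, hi⟩ <;> simp [hm] <;> omega

lemma comp_iff (lam k n : ℕ) (hl : 0 < lam) (msg : Fin k → Bool) (x : Fin n → ℕ)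
    (ht : 2 * linfN x (enc n k lam msg) + 1 ≤ (n - k) / lam)
    {i : ℕ} (hik : i < k) (hin : i < n) :
    ((((x ⟨i, hin⟩ : ℕ) : ℤ) - (cdiv (n - ones msg i) lam : ℤ)).natAbs
      < (((x ⟨i, hin⟩ : ℕ) : ℤ) - (cdiv (1 + zeros msg i) lam : ℤ)).natAbs)
      ↔ msg ⟨i, hik⟩ = true := by
  set t := linfN x (enc n k lam msg) with htd
  have hoz : ones msg i + zeros msg i = i := ones_add_zeros msg i (Nat.le_of_lt hik)
  set a := 1 + zeros msg i with ha
  set b := n - ones msg i with hb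
  have hab : a ≤ b := by omega
  have hba : n - k ≤ b - a := by omega
  have hgap : cdiv a lam + (n - k) / lam ≤ cdiv b lam := by
    have h1 := cdiv_gap hl hab
    have h2 : (n - k) / lam ≤ (b - a) / lam := Nat.div_le_div_right hba
    omega
  have hbound : (((x ⟨i, hin⟩ : ℕ) : ℤ) - ((enc n k lam msg ⟨i, hin⟩ : ℕ) : ℤ)).natAbs ≤ t := by
    rw [htd]
    simp only [linfN]
    exact Finset.le_sup (f := fun j : Fin n => ((x j : ℤ) - ((enc n k lam msg j : ℕ) : ℤ)).natAbs) (mem_univ (⟨i, hin⟩ : Fin n))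
  have henc : enc n k lam msg ⟨i, hin⟩
      = if msg ⟨i, hik⟩ = true then cdiv b lam else cdiv a lam := by
    simp only [enc]
    rw [dif_pos hik]
  rw [henc] at hbound
  cases hmv : msg ⟨i, hik⟩ with
  | true =>
    rw [hmv, if_pos rfl] at hbound
    simp only [iff_true]
    omega
  | false =>
    rw [hmv, if_neg (by simp)] at hbound
    simp only [Bool.false_eq_true, iff_false, not_lt]
    omega

lemma state_eq (lam k n : ℕ) (hl : 0 < lam) (hkn : k ≤ n)
    (msg : Fin k → Bool) (x : Fin n → ℕ) (x' : ℕ → ℕ)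
    (hx' : ∀ j (h : j < n), x' j = x ⟨j, h⟩)
    (ht : 2 * linfN x (enc n k lam msg) + 1 ≤ (n - k) / lam) :
    ∀ i, i ≤ k → decMaxMin n lam x' i = (n - ones msg i, 1 + zeros msg i) := by
  intro i
  induction i with
  | zero => intro _; simp [decMaxMin, ones_zero, zeros_zero]
  | succ i ih =>
    intro h
    have hik : i < k := h
    have hin : i < n := lt_of_lt_of_le hik hkn
    rw [decMaxMin, ih (Nat.le_of_lt hik)]
    rw [hx' i hin]
    rcases hmv : msg ⟨i, hik⟩ with _ | _
    · rw [if_neg]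
      · rw [zeros_succ msg hik, ones_succ msg hik, hmv]
        simp
        omega
      · intro hc
        have := (comp_iff lam k n hl msg x ht hik hin).mp hc
        rw [hmv] at this
        simp at this
    · rw [if_pos ((comp_iff lam k n hl msg x ht hik hin).mpr hmv)]
      rw [zeros_succ msg hik, ones_succ msg hik, hmv]
      simp
      omega

/-- Unique decoding: if `x ∈ S_n^λ` is within `ℓ∞`-distance `(d−1)/2` of the
codeword `E_{n,k}^λ(msg)`, where `d = ⌊(n−k)/λ⌋`, then `U_{n,k}^λ(x) = msg`. -/
theorem decodeU_correct (lam m k : ℕ) (hl : 0 < lam) (hm : 0 < m) (hk : 0 < k)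
    (n : ℕ) (hn : n = m * lam) (hkn : k + lam ≤ n)
    (msg : Fin k → Bool) (x : Fin n → ℕ) (hx : memSnl n m lam x)
    (hclose : (linfN x (enc n k lam msg) : ℝ) ≤ ((((n - k) / lam : ℕ) : ℝ) - 1) / 2) :
    decodeU n k lam x = msg := by
  have hk_le : k ≤ n := by omega
  have ht : 2 * linfN x (enc n k lam msg) + 1 ≤ (n - k) / lam := by
    have h1 : ((2 * linfN x (enc n k lam msg) + 1 : ℕ) : ℝ) ≤ (((n - k) / lam : ℕ) : ℝ) := by
      push_cast
      linarith [hclose]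
    exact_mod_cast h1
  funext i
  have hik : i.val < k := i.isLt
  have hin : i.val < n := lt_of_lt_of_le hik hk_le
  simp only [decodeU]
  rw [state_eq lam k n hl hk_le msg x _ (fun j h => dif_pos h) ht i.val (Nat.le_of_lt hik)]
  simp only [dif_pos hin]
  have := comp_iff lam k n hl msg x ht hik hin
  cases hmv : msg i with
  | true =>
    apply decide_eq_true
    apply this.mpr
    rwa [show (⟨i.val, hik⟩ : Fin k) = i from Fin.ext rfl]
  | false =>
    apply decide_eq_false
    intro hc
    have h2 := this.mp hc
    rw [show (⟨i.val, hik⟩ : Fin k) = i from Fin.ext rfl, hmv] at h2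
    simp at h2
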